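/- arXiv:2103.10864 — 2 statements merged into one kernel-verified Lean document; each statement's English description precedes it below -/
import Mathlib

section
/- Let d ≥ 3 and let u : ℝ × ℝ^d → ℝ^d be a smooth real Schur flow satisfying the barotropic Euler equation with smooth potential Π. Then for every even integer n = 2i with n ≤ d, the truncated subsystem (u_1, …, u_n) satisfies its own Euler-type equation: for all a ≤ n, ∂_t u_a + Σ_{j=1}^{n} u_j ∂_j u_a = −∂_a Π. -/
/-- Partial derivative in time of a function on `ℝ × ℝ^d`. -/
noncomputable def pdt {d : ℕ} (f : ℝ × (Fin d → ℝ) → ℝ) (p : ℝ × (Fin d → ℝ)) : ℝ :=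
  fderiv ℝ f p (1, 0)

/-- Partial derivative in the `j`-th spatial coordinate of a function on `ℝ × ℝ^d`. -/
noncomputable def pdx {d : ℕ} (j : Fin d) (f : ℝ × (Fin d → ℝ) → ℝ) (p : ℝ × (Fin d → ℝ)) : ℝ :=
  fderiv ℝ f p (0, Pi.single j 1)

/-- Real Schur flow: with 1-based indices `J = j+1`, `K = k+1`, we have `∂_J u_K = 0`
whenever `J > 2⌈K/2⌉`; here `⌈K/2⌉ = (K+1)/2` in natural-number division. -/
def IsRSF {d : ℕ} (u : Fin d → ℝ × (Fin d → ℝ) → ℝ) : Prop :=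
  ∀ j k : Fin d, 2 * (((k : ℕ) + 1 + 1) / 2) < (j : ℕ) + 1 → ∀ p, pdx j (u k) p = 0

/-- for a real Schur flow solving the barotropic Euler equation, each even
truncation `(u_1, …, u_{2i})` satisfies its own Euler-type equation. -/
theorem rsf_truncated_euler
    {d : ℕ} (hd : 3 ≤ d)
    (u : Fin d → ℝ × (Fin d → ℝ) → ℝ) (P : ℝ × (Fin d → ℝ) → ℝ)
    (hu : ∀ k, ContDiff ℝ (⊤ : ℕ∞) (u k)) (hP : ContDiff ℝ (⊤ : ℕ∞) P)
    (hRSF : IsRSF u)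
    (heuler : ∀ k p, pdt (u k) p + ∑ j, u j p * pdx j (u k) p = -(pdx k P p))
    (i : ℕ) (hi : 1 ≤ i) (hn : 2 * i ≤ d) :
    ∀ a : Fin d, (a : ℕ) + 1 ≤ 2 * i → ∀ p,
      pdt (u a) p
        + ∑ j ∈ Finset.univ.filter (fun j : Fin d => (j : ℕ) + 1 ≤ 2 * i),
            u j p * pdx j (u a) p
        = -(pdx a P p) := by
  intro a ha p
  have h := heuler a p
  rw [← h]
  congr 1
  refine Finset.sum_subset (Finset.filter_subset _ _) ?_
  intro j _ hj
  simp only [Finset.mem_filter, Finset.mem_univ, true_and] at hj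
  have : pdx j (u a) p = 0 := hRSF j a (by omega) p
  rw [this, mul_zero]
end

section
/- Let d ≥ 3 and let u : ℝ × ℝ^d → ℝ^d be a smooth real Schur flow satisfying the barotropic Euler equation with smooth potential Π. For an even integer n = 2i ≤ d, define the partial-sum vorticity 2-form ω^{(n)} by ω^{(n)}_{jk} = ∂_j u_k − ∂_k u_j if both j ≤ n and k ≤ n, and ω^{(n)}_{jk} = 0 otherwise. Then ω^{(n)} is Lie-transported by the full velocity u: for all j, k ≤ d, ∂_t ω^{(n)}_{jk} + Σ_{m=1}^{d} ( u_m ∂_m ω^{(n)}_{jk} + ω^{(n)}_{mk} ∂_j u_m + ω^{(n)}_{jm} ∂_k u_m ) = 0. -/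
/-!
Differentiating the Euler equation and antisymmetrising gives, for any smooth Euler flow, the
transport equation of the full vorticity `Ω_jk = ∂_j u_k - ∂_k u_j`, whose stretching term
`Σ_m (∂_j u_m ∂_m u_k - ∂_k u_m ∂_m u_j)` equals `Σ_m (Ω_mk ∂_j u_m + Ω_jm ∂_k u_m)`.
For a real Schur flow the components `u_1, …, u_n` (`n` even) do not depend on `x_m` for `m > n`,
so truncating the vorticity to the indices `≤ n` does not change this equation on those indices,
and on the remaining indices every term of the transport equation vanishes.
-/

open Finset

section SecondDerivative

variable {E : Type*} [NormedAddCommGroup E] [NormedSpace ℝ E] {f : E → ℝ}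

theorem fderiv_fderiv_apply_comm (hf : ContDiff ℝ 2 f) (v w p : E) :
    fderiv ℝ (fun q => fderiv ℝ f q v) p w = fderiv ℝ (fun q => fderiv ℝ f q w) p v := by
  have hdf : DifferentiableAt ℝ (fderiv ℝ f) p :=
    (hf.fderiv_right (m := 1) le_rfl).differentiable one_ne_zero p
  rw [fderiv_clm_apply hdf (differentiableAt_const v),
    fderiv_clm_apply hdf (differentiableAt_const w)]
  simpa using (hf.contDiffAt.isSymmSndFDerivAt (by simp)) w v

theorem ContDiff.differentiable_fderiv_apply (hf : ContDiff ℝ 2 f) (v : E) :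
    Differentiable ℝ (fun q => fderiv ℝ f q v) :=
  ((hf.fderiv_right (m := 1) le_rfl).clm_apply contDiff_const).differentiable one_ne_zero

end SecondDerivative

section PartialDerivative

variable {d : ℕ} {f g : ℝ × (Fin d → ℝ) → ℝ} {p : ℝ × (Fin d → ℝ)}

theorem pdx_fun_add (j : Fin d) (hf : DifferentiableAt ℝ f p) (hg : DifferentiableAt ℝ g p) :
    pdx j (fun q => f q + g q) p = pdx j f p + pdx j g p := by
  simp [pdx, fderiv_fun_add hf hg]

theorem pdx_fun_sub (j : Fin d) (hf : DifferentiableAt ℝ f p) (hg : DifferentiableAt ℝ g p) :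
    pdx j (fun q => f q - g q) p = pdx j f p - pdx j g p := by
  simp [pdx, fderiv_fun_sub hf hg]

theorem pdt_fun_sub (hf : DifferentiableAt ℝ f p) (hg : DifferentiableAt ℝ g p) :
    pdt (fun q => f q - g q) p = pdt f p - pdt g p := by
  simp [pdt, fderiv_fun_sub hf hg]

theorem pdx_fun_mul (j : Fin d) (hf : DifferentiableAt ℝ f p) (hg : DifferentiableAt ℝ g p) :
    pdx j (fun q => f q * g q) p = pdx j f p * g p + f p * pdx j g p := by
  simp [pdx, fderiv_fun_mul hf hg]; ring

theorem pdx_fun_sum {ι : Type*} {s : Finset ι} {F : ι → ℝ × (Fin d → ℝ) → ℝ} (j : Fin d)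
    (hF : ∀ m ∈ s, DifferentiableAt ℝ (F m) p) :
    pdx j (fun q => ∑ m ∈ s, F m q) p = ∑ m ∈ s, pdx j (F m) p := by
  simp [pdx, fderiv_fun_sum hF]

theorem pdx_fun_neg (j : Fin d) : pdx j (fun q => -f q) p = -pdx j f p := by
  simp [pdx]

end PartialDerivative

noncomputable def vorticity {d : ℕ} (u : Fin d → ℝ × (Fin d → ℝ) → ℝ) (j k : Fin d) :
    ℝ × (Fin d → ℝ) → ℝ :=
  fun p => pdx j (u k) p - pdx k (u j) p

section Euler

variable {d : ℕ} {u : Fin d → ℝ × (Fin d → ℝ) → ℝ} {P f : ℝ × (Fin d → ℝ) → ℝ}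

theorem ContDiff.differentiable_pdx (hf : ContDiff ℝ 2 f) (j : Fin d) :
    Differentiable ℝ (pdx j f) :=
  hf.differentiable_fderiv_apply _

theorem ContDiff.differentiable_pdt (hf : ContDiff ℝ 2 f) : Differentiable ℝ (pdt f) :=
  hf.differentiable_fderiv_apply _

theorem pdx_pdx_comm (hf : ContDiff ℝ 2 f) (j k : Fin d) (p) :
    pdx j (pdx k f) p = pdx k (pdx j f) p :=
  fderiv_fderiv_apply_comm hf _ _ p

theorem pdx_pdt_comm (hf : ContDiff ℝ 2 f) (j : Fin d) (p) :
    pdx j (pdt f) p = pdt (pdx j f) p :=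
  fderiv_fderiv_apply_comm hf _ _ p

theorem pdx_euler (hu : ∀ k, ContDiff ℝ 2 (u k))
    (heuler : ∀ k p, pdt (u k) p + ∑ j, u j p * pdx j (u k) p = -(pdx k P p))
    (l k : Fin d) (p) :
    pdx l (pdt (u k)) p + ∑ m, (pdx l (u m) p * pdx m (u k) p + u m p * pdx l (pdx m (u k)) p)
      = -pdx l (pdx k P) p := by
  have hprod : ∀ m ∈ univ, DifferentiableAt ℝ (fun q => u m q * pdx m (u k) q) p :=
    fun m _ => ((hu m).differentiable two_ne_zero p).mul ((hu k).differentiable_pdx m p)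
  have h := congrArg (fun g => pdx l g p) (funext (heuler k))
  rw [pdx_fun_add l ((hu k).differentiable_pdt p) (DifferentiableAt.fun_sum hprod),
    pdx_fun_sum l hprod, pdx_fun_neg] at h
  rwa [← Finset.sum_congr rfl fun m _ => pdx_fun_mul l ((hu m).differentiable two_ne_zero p)
    ((hu k).differentiable_pdx m p)]

theorem vorticity_transport (hu : ∀ k, ContDiff ℝ 2 (u k)) (hP : ContDiff ℝ 2 P)
    (heuler : ∀ k p, pdt (u k) p + ∑ j, u j p * pdx j (u k) p = -(pdx k P p))
    (j k : Fin d) (p) :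
    pdt (vorticity u j k) p + ∑ m, (u m p * pdx m (vorticity u j k) p
      + pdx j (u m) p * pdx m (u k) p - pdx k (u m) p * pdx m (u j) p) = 0 := by
  have hj := pdx_euler hu heuler j k p
  have hk := pdx_euler hu heuler k j p
  have hvort : ∀ l, pdx l (vorticity u j k) p = pdx l (pdx j (u k)) p - pdx l (pdx k (u j)) p :=
    fun l => pdx_fun_sub l ((hu k).differentiable_pdx j p) ((hu j).differentiable_pdx k p)
  have hvort_t : pdt (vorticity u j k) p = pdt (pdx j (u k)) p - pdt (pdx k (u j)) p :=
    pdt_fun_sub ((hu k).differentiable_pdx j p) ((hu j).differentiable_pdx k p)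
  rw [hvort_t, ← pdx_pdt_comm (hu k), ← pdx_pdt_comm (hu j)]
  -- subtract the differentiated Euler equations; the Hessian of `P` cancels by symmetry
  simp only [hvort, pdx_pdx_comm (hu k) _ j, pdx_pdx_comm (hu j) _ k] at *
  rw [pdx_pdx_comm hP k j] at hk
  simp only [sum_add_distrib, sum_sub_distrib, mul_sub] at *
  linarith

end Euler

section SchurFlow

variable {d : ℕ} {u : Fin d → ℝ × (Fin d → ℝ) → ℝ}

noncomputable def partialVorticity (u : Fin d → ℝ × (Fin d → ℝ) → ℝ) (n : ℕ) (j k : Fin d) :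
    ℝ × (Fin d → ℝ) → ℝ :=
  if (j : ℕ) < n ∧ (k : ℕ) < n then vorticity u j k else 0

theorem partialVorticity_of_lt {n : ℕ} {j k : Fin d} (h : (j : ℕ) < n ∧ (k : ℕ) < n) :
    partialVorticity u n j k = vorticity u j k :=
  if_pos h

theorem partialVorticity_of_not_lt {n : ℕ} {j k : Fin d} (h : ¬((j : ℕ) < n ∧ (k : ℕ) < n)) :
    partialVorticity u n j k = 0 :=
  if_neg h

theorem IsRSF.pdx_eq_zero (hu : IsRSF u) {i : ℕ} {j k : Fin d} (hk : (k : ℕ) < 2 * i)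
    (hj : 2 * i ≤ (j : ℕ)) (p) : pdx j (u k) p = 0 :=
  hu j k (by omega) p

theorem IsRSF.partialVorticity_mul_pdx_eq_zero (hu : IsRSF u) {i : ℕ} {j m : Fin d} (k : Fin d)
    (hj : 2 * i ≤ (j : ℕ)) (p) :
    partialVorticity u (2 * i) m k p * pdx j (u m) p = 0 ∧
      partialVorticity u (2 * i) k m p * pdx j (u m) p = 0 := by
  by_cases hm : (m : ℕ) < 2 * i
  · simp [hu.pdx_eq_zero hm hj]
  · simp [partialVorticity_of_not_lt, hm]

theorem IsRSF.partialVorticity_stretching (hu : IsRSF u) (i : ℕ) (j k m : Fin d) (p) :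
    partialVorticity u (2 * i) m k p * pdx j (u m) p
      + partialVorticity u (2 * i) j m p * pdx k (u m) p
      = if (j : ℕ) < 2 * i ∧ (k : ℕ) < 2 * i then
          pdx j (u m) p * pdx m (u k) p - pdx k (u m) p * pdx m (u j) p
        else 0 := by
  by_cases hjk : (j : ℕ) < 2 * i ∧ (k : ℕ) < 2 * i
  · rw [if_pos hjk]
    by_cases hm : (m : ℕ) < 2 * i
    · rw [partialVorticity_of_lt ⟨hm, hjk.2⟩, partialVorticity_of_lt ⟨hjk.1, hm⟩, vorticity,
        vorticity]
      ring
    · rw [not_lt] at hm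
      simp [partialVorticity_of_not_lt, hm, hu.pdx_eq_zero hjk.1 hm, hu.pdx_eq_zero hjk.2 hm]
  · rw [if_neg hjk]
    rcases not_and_or.1 hjk with hj | hk
    · rw [(hu.partialVorticity_mul_pdx_eq_zero k (not_lt.1 hj) p).1,
        partialVorticity_of_not_lt fun h => hj h.1]
      simp
    · rw [(hu.partialVorticity_mul_pdx_eq_zero j (not_lt.1 hk) p).2,
        partialVorticity_of_not_lt fun h => hk h.2]
      simp

end SchurFlow

theorem rsf_partial_vorticity_lie_transport_general
    {d : ℕ}
    (u : Fin d → ℝ × (Fin d → ℝ) → ℝ) (P : ℝ × (Fin d → ℝ) → ℝ)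
    (hu : ∀ k, ContDiff ℝ (⊤ : ℕ∞) (u k)) (hP : ContDiff ℝ (⊤ : ℕ∞) P)
    (hRSF : IsRSF u)
    (heuler : ∀ k p, pdt (u k) p + ∑ j, u j p * pdx j (u k) p = -(pdx k P p))
    (i : ℕ)
    (ω : Fin d → Fin d → ℝ × (Fin d → ℝ) → ℝ)
    (hω : ∀ j k p, ω j k p =
      if (j : ℕ) < 2 * i ∧ (k : ℕ) < 2 * i then pdx j (u k) p - pdx k (u j) p else 0) :
    ∀ j k p, pdt (ω j k) p
      + ∑ m, (u m p * pdx m (ω j k) p + ω m k p * pdx j (u m) p + ω j m p * pdx k (u m) p)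
      = 0 := by
  obtain rfl : ω = partialVorticity u (2 * i) := by
    funext j k p
    rw [hω, partialVorticity]
    split_ifs <;> rfl
  have h2 : (2 : WithTop ℕ∞) ≤ (⊤ : ℕ∞) := WithTop.coe_le_coe.2 le_top
  intro j k p
  simp only [add_assoc, hRSF.partialVorticity_stretching]
  by_cases hjk : (j : ℕ) < 2 * i ∧ (k : ℕ) < 2 * i
  · simp only [partialVorticity_of_lt hjk, if_pos hjk, ← add_sub_assoc]
    exact vorticity_transport (fun k => (hu k).of_le h2) (hP.of_le h2) heuler j k p
  · simp [partialVorticity_of_not_lt hjk, hjk, pdt, pdx]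

/-- for a real Schur flow solving the barotropic Euler equation, the partial-sum
vorticity `ω^{(n)}`, `n = 2i ≤ d` (the vorticity of the first `n` components, extended by zero),
is Lie-transported by the full velocity `u`. -/
theorem rsf_partial_vorticity_lie_transport
    {d : ℕ} (hd : 3 ≤ d)
    (u : Fin d → ℝ × (Fin d → ℝ) → ℝ) (P : ℝ × (Fin d → ℝ) → ℝ)
    (hu : ∀ k, ContDiff ℝ (⊤ : ℕ∞) (u k)) (hP : ContDiff ℝ (⊤ : ℕ∞) P)
    (hRSF : IsRSF u)
    (heuler : ∀ k p, pdt (u k) p + ∑ j, u j p * pdx j (u k) p = -(pdx k P p))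
    (i : ℕ) (hi : 1 ≤ i) (hn : 2 * i ≤ d)
    (ω : Fin d → Fin d → ℝ × (Fin d → ℝ) → ℝ)
    (hω : ∀ j k p, ω j k p =
      if (j : ℕ) < 2 * i ∧ (k : ℕ) < 2 * i then pdx j (u k) p - pdx k (u j) p else 0) :
    ∀ j k p, pdt (ω j k) p
      + ∑ m, (u m p * pdx m (ω j k) p + ω m k p * pdx j (u m) p + ω j m p * pdx k (u m) p)
      = 0 :=
  rsf_partial_vorticity_lie_transport_general u P hu hP hRSF heuler i ω hω
end
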